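/- Under the partial bidiagonalization relations Aᵀ V_k = N Q_k B_kᵀ + β_{k+1} N q_{k+1} e_kᵀ with Q_k ∈ ℝ^{n×k} N-orthonormal, first column q₁ = N⁻¹b/β₁ where β₁ = √(bᵀN⁻¹b) (b ≠ 0), B_k the k×k upper bidiagonal matrix with nonzero diagonal entries, and q_{k+1} N-orthogonal to every column of Q_k (Q_kᵀ N q_{k+1} = 0), the iterate u_k := V_k z_k with z_k := β₁ B_k⁻ᵀ e₁ satisfies the Galerkin orthogonality condition Q_kᵀ (Aᵀ u_k − b) = 0. -/

import Mathlib

/-! Since `Qᵀ N Q = 1` and `q_{k+1}` is `N`-orthogonal to the columns of `Q`, the relation gives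
`Qᵀ Aᵀ V = Bᵀ`, so `Qᵀ Aᵀ u_k = Bᵀ z_k = β₁ e₁`. On the other side `b = β₁ N q₁ = N Q (β₁ e₁)`,
hence `Qᵀ b = β₁ e₁` as well. -/

open Matrix

namespace Matrix

lemma det_upperBidiagonal {R : Type*} [CommRing R] {k : ℕ} (α β : Fin k → R) :
    (of fun i j => if j = i then α i else if (j : ℕ) = i + 1 then β j else 0).det =
      ∏ i, α i := by
  rw [det_of_isUpperTriangular]
  · simp
  · intro i j hji
    have hji' : (j : ℕ) < i := hji
    simp [Fin.ne_of_val_ne hji'.ne, show (j : ℕ) ≠ i + 1 by omega]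

/-- When the square root vanishes, `0⁻¹ = 0` makes the left side `0`, but then `M b = 0` too. -/
lemma PosSemidef.sqrt_dotProduct_mulVec_smul_inv_smul {n : Type*} [Fintype n]
    {M : Matrix n n ℝ} (hM : M.PosSemidef) (b : n → ℝ) :
    √(b ⬝ᵥ M *ᵥ b) • (√(b ⬝ᵥ M *ᵥ b))⁻¹ • (M *ᵥ b) = M *ᵥ b := by
  by_cases hβ : √(b ⬝ᵥ M *ᵥ b) = 0
  · have hform : b ⬝ᵥ M *ᵥ b = 0 :=
      le_antisymm (Real.sqrt_eq_zero'.mp hβ) (by simpa using hM.dotProduct_mulVec_nonneg b)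
    have hMb : M *ᵥ b = 0 := (hM.dotProduct_mulVec_zero_iff b).mp (by simpa using hform)
    simp [hMb]
  · rw [smul_inv_smul₀ hβ]

variable {R : Type*} [CommRing R] {n k : Type*} [Fintype n] [Fintype k] [DecidableEq k]

lemma transpose_mulVec_mulVec_mulVec_eq {N : Matrix n n R} {Q : Matrix n k R}
    (hQ : Qᵀ * N * Q = 1) (x : k → R) : Qᵀ *ᵥ (N *ᵥ (Q *ᵥ x)) = x := by
  rw [mulVec_mulVec, mulVec_mulVec, hQ, one_mulVec]

lemma transpose_mulVec_mulVec_eq_of_eq_add {m : Type*} [Fintype m] {N : Matrix n n R}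
    {Q : Matrix n k R} {M : Matrix n m R} {C : Matrix k m R} {E : Matrix n m R} (hQ : Qᵀ * N * Q = 1)
    (hE : Qᵀ * E = 0) (hM : M = N * Q * C + E) (z : m → R) : Qᵀ *ᵥ (M *ᵥ z) = C *ᵥ z := by
  rw [hM, add_mulVec, mulVec_add, mulVec_mulVec _ Qᵀ E, hE, zero_mulVec, add_zero,
    ← mulVec_mulVec, ← mulVec_mulVec, transpose_mulVec_mulVec_mulVec_eq hQ]

end Matrix

/-- Galerkin orthogonality of the GKB iterate: under the partial bidiagonalization
relations with `q_{k+1}` `N`-orthogonal to the columns of `Q_k`, the iterate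
`u_k = V_k z_k` with `z_k = β₁ B_k⁻ᵀ e₁` satisfies `Q_kᵀ (Aᵀ u_k − b) = 0`. -/
theorem stmt12 {m n k : ℕ} (hk : 0 < k)
    (N : Matrix (Fin n) (Fin n) ℝ) (hN : N.PosDef)
    (A : Matrix (Fin m) (Fin n) ℝ)
    (b : Fin n → ℝ)
    (β₁ : ℝ) (hβ : β₁ = Real.sqrt (b ⬝ᵥ N⁻¹ *ᵥ b))
    (q₁ : Fin n → ℝ) (hq : q₁ = β₁⁻¹ • (N⁻¹ *ᵥ b))
    (V : Matrix (Fin m) (Fin k) ℝ) (Q : Matrix (Fin n) (Fin k) ℝ)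
    (hQ : Qᵀ * N * Q = 1) (hcol : ∀ i, Q i ⟨0, hk⟩ = q₁ i)
    (α β : Fin k → ℝ) (hα : ∀ i, α i ≠ 0)
    (B : Matrix (Fin k) (Fin k) ℝ)
    (hB : B = Matrix.of fun i j =>
      if j = i then α i else if (j : ℕ) = (i : ℕ) + 1 then β j else 0)
    (βk1 : ℝ) (qk1 : Fin n → ℝ)
    (horth : Qᵀ *ᵥ (N *ᵥ qk1) = 0)
    (hrel : Aᵀ * V = N * Q * Bᵀ +
      βk1 • Matrix.vecMulVec (N *ᵥ qk1)
        (Pi.single (⟨k - 1, by omega⟩ : Fin k) (1 : ℝ) : Fin k → ℝ))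
    (z : Fin k → ℝ)
    (hz : z = β₁ • (Bᵀ)⁻¹ *ᵥ (Pi.single (⟨0, hk⟩ : Fin k) (1 : ℝ) : Fin k → ℝ))
    (uk : Fin m → ℝ) (huk : uk = V *ᵥ z) :
    Qᵀ *ᵥ (Aᵀ *ᵥ uk - b) = 0 := by
  set e₁ : Fin k → ℝ := Pi.single ⟨0, hk⟩ 1
  have hBz : Bᵀ *ᵥ z = β₁ • e₁ := by
    have hBdet : IsUnit Bᵀ.det := by
      rw [det_transpose, hB, det_upperBidiagonal]
      exact (Finset.prod_ne_zero_iff.mpr fun i _ => hα i).isUnit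
    rw [hz, mulVec_smul, mulVec_mulVec, mul_nonsing_inv _ hBdet, one_mulVec]
  have hb : b = N *ᵥ (Q *ᵥ (β₁ • e₁)) := by
    have hQe₁ : Q *ᵥ e₁ = q₁ := by ext i; simp [e₁, hcol]
    rw [mulVec_smul, hQe₁, hq, hβ, hN.inv.posSemidef.sqrt_dotProduct_mulVec_smul_inv_smul,
      mulVec_mulVec, mul_nonsing_inv _ hN.det_pos.ne'.isUnit, one_mulVec]
  have hE : Qᵀ * (βk1 • vecMulVec (N *ᵥ qk1) (Pi.single (⟨k - 1, by omega⟩ : Fin k) 1)) = 0 := by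
    rw [Matrix.mul_smul, mul_vecMulVec, horth, zero_vecMulVec, smul_zero]
  rw [huk, mulVec_mulVec, mulVec_sub, transpose_mulVec_mulVec_eq_of_eq_add hQ hE hrel, hBz, hb,
    transpose_mulVec_mulVec_mulVec_eq hQ, sub_self]
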